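/- arXiv:1804.01413 — 2 statements merged into one kernel-verified Lean document; each statement's English description precedes it below -/
import Mathlib

section
/- The assignment n ↦ [loop]^n defines a group isomorphism from ℤ (under addition) onto π₁(S¹, 1); in particular the map is bijective and sends n + m to [loop]^n * [loop]^m. -/
attribute [local instance] Path.Homotopic.setoid

/-- The standard loop in the circle based at `1`, given by `t ↦ exp (2 π i t)`. -/
noncomputable def circleLoop : Path (1 : Circle) 1 where
  toFun t := Circle.exp (2 * Real.pi * t)
  continuous_toFun := Circle.exp.continuous.comp (continuous_const.mul continuous_subtype_val)
  source' := by simp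
  target' := by simp

/-- The homotopy class of the standard loop, as an element of the fundamental group of
the circle. -/
noncomputable def circleLoopClass : FundamentalGroup Circle 1 :=
  FundamentalGroup.fromPath (X := TopCat.of Circle) ⟦circleLoop⟧


/-!
`Circle.exp : ℝ → S¹` is a covering map, the quotient by the deck group `2πℤ` acting by
translation, and `ℝ` is simply connected. Monodromy therefore identifies `π₁(S¹, 1)` with
`2πℤ`: a loop is sent to the endpoint of its lift starting at `0`. The standard loop lifts to
`t ↦ 2πt`, so it corresponds to the generator `2π`.
-/

open Real Function MulOpposite

lemma AddSubgroup.bijective_zsmul_zmultiples {A : Type*} [AddGroup A] [IsAddTorsionFree A] {a : A}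
    (ha : a ≠ 0) : Bijective fun n : ℤ => n • (⟨a, mem_zmultiples a⟩ : zmultiples a) :=
  ⟨fun _ _ h => injective_zsmul_iff_not_isOfFinAddOrder.mpr
      (not_isOfFinAddOrder_of_isAddTorsionFree ha) congr(($h : A)),
    fun ⟨_, k, hk⟩ => ⟨k, Subtype.ext hk⟩⟩

lemma bijective_zpow_op_ofAdd {A : Type*} [AddGroup A] {a : A}
    (ha : Bijective fun n : ℤ => n • a) :
    Bijective fun n : ℤ => op (Multiplicative.ofAdd a) ^ n := by
  have : (fun n : ℤ => op (Multiplicative.ofAdd a) ^ n) =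
      op ∘ Multiplicative.ofAdd ∘ fun n => n • a := by
    ext n
    simp [op_zpow, ofAdd_zsmul]
  rw [this]
  exact opEquiv.bijective.comp (Multiplicative.ofAdd.bijective.comp ha)

lemma MulEquiv.bijective_zpow_iff {G H : Type*} [Group G] [Group H] (φ : G ≃* H) (g : G) :
    Bijective (fun n : ℤ => φ g ^ n) ↔ Bijective (fun n : ℤ => g ^ n) := by
  simp_rw [← map_zpow]
  exact φ.bijective.of_comp_iff' _

noncomputable def circleLoopLift : Path (0 : ℝ) (2 * π) where
  toFun t := 2 * π * t
  source' := by simp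
  target' := by simp

lemma monodromy_circleLoopClass :
    Circle.isCoveringMap_exp.monodromy circleLoopClass ⟨0, by simp⟩ = ⟨2 * π, by simp⟩ :=
  -- `circleLoopLift.map Circle.exp` is `circleLoop` up to the casts of its endpoints, definitionally
  Circle.isCoveringMap_exp.monodromy_eq_of_map_eq (.mk circleLoopLift)
    (Path.Homotopic.Quotient.mk_cast circleLoop _ _)

noncomputable def Circle.fundamentalGroupEquiv :
    FundamentalGroup Circle 1 ≃* (Multiplicative (AddSubgroup.zmultiples (2 * π)))ᵐᵒᵖ :=
  Circle.isAddQuotientCoveringMap_exp.fundamentalGroupEquiv ⟨0, by simp⟩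

lemma Circle.fundamentalGroupEquiv_circleLoopClass :
    Circle.fundamentalGroupEquiv circleLoopClass =
      op (Multiplicative.ofAdd ⟨2 * π, AddSubgroup.mem_zmultiples _⟩) := by
  refine Circle.isAddQuotientCoveringMap_exp.fundamentalGroupToMulOpposite_apply_eq_Iff.mpr ?_
  rw [monodromy_circleLoopClass]
  simp

/-- The assignment `n ↦ [loop]^n` defines a group isomorphism from `ℤ` (under addition)
onto the fundamental group of the circle: the map is bijective and sends `n + m` to
`[loop]^n * [loop]^m`. -/
theorem circle_fundamentalGroup_iso_via_loop_powers :
    Function.Bijective (fun n : ℤ => circleLoopClass ^ n) ∧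
      ∀ n m : ℤ, circleLoopClass ^ (n + m) = circleLoopClass ^ n * circleLoopClass ^ m := by
  refine ⟨?_, fun n m => zpow_add _ n m⟩
  rw [← Circle.fundamentalGroupEquiv.bijective_zpow_iff,
    Circle.fundamentalGroupEquiv_circleLoopClass]
  exact bijective_zpow_op_ofAdd (AddSubgroup.bijective_zsmul_zmultiples (by positivity))
end

section
/- The class of the standard loop generates an infinite cyclic subgroup of the fundamental group of the circle: the homotopy class [loop] of the loop t ↦ exp(2πit) has infinite order in π₁(S¹, 1), i.e., [loop]^n = 1 implies n = 0 for n ∈ ℤ. -/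
attribute [local instance] Path.Homotopic.setoid

/-!
`Circle.exp : ℝ → S¹` is a covering map whose deck group is `2πℤ`, acting by translation.
Lifting loops at `1` to paths starting at `0` and reading off the endpoint gives a homomorphism
(the degree) from `π₁(S¹, 1)` to `2πℤ`. The standard loop lifts to `t ↦ 2πt`, so its degree
is `2π`, which has infinite order.
-/

open Real unitInterval

theorem IsCoveringMap.monodromy_mk_eq_of_lift {E X : Type*} [TopologicalSpace E]
    [TopologicalSpace X] {p : E → X} (cov : IsCoveringMap p) {x y : X} (γ : Path x y)
    (e : p ⁻¹' {x}) {Γ : I → E} (hΓ : Continuous Γ) (hlift : p ∘ Γ = γ) (hΓ₀ : Γ 0 = e) :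
    (cov.monodromy (.mk γ) e : E) = Γ 1 := by
  rw [(cov.eq_liftPath_iff _).mpr ⟨hΓ, hlift, hΓ₀⟩]
  rfl

noncomputable def circleDegree :
    FundamentalGroup Circle 1 →* (Multiplicative (AddSubgroup.zmultiples (2 * π)))ᵐᵒᵖ :=
  Circle.isAddQuotientCoveringMap_exp.fundamentalGroupToMulOpposite ⟨0, by simp⟩

theorem circleDegree_circleLoopClass :
    circleDegree circleLoopClass = .op (.ofAdd ⟨2 * π, AddSubgroup.mem_zmultiples _⟩) := by
  have hend : (Circle.isCoveringMap_exp.monodromy circleLoopClass ⟨0, by simp⟩ : ℝ) =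
      2 * π * ((1 : I) : ℝ) :=
    Circle.isCoveringMap_exp.monodromy_mk_eq_of_lift circleLoop _ (by fun_prop) rfl (by simp)
  rw [circleDegree, IsAddQuotientCoveringMap.fundamentalGroupToMulOpposite_apply_eq_Iff, hend]
  simp

/-- The class of the standard loop has infinite order in the fundamental group of the
circle: `[loop]^n = 1` implies `n = 0` for `n : ℤ`. -/
theorem circleLoopClass_infinite_order (n : ℤ) (h : circleLoopClass ^ n = 1) : n = 0 := by
  have hdeg := congrArg circleDegree h
  rw [map_zpow, map_one, circleDegree_circleLoopClass] at hdeg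
  have h2π : n • (2 * π) = 0 := by
    simpa [← MulOpposite.op_zpow, ← ofAdd_zsmul] using hdeg
  simpa [Real.pi_ne_zero] using h2π
end
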